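/- arXiv:1507.03209 — 2 statements merged into one kernel-verified Lean document; each statement's English description precedes it below -/
import Mathlib

section
/- Let G be a connected Eulerian digraph and x, y chip-distributions with x ⤳ y. Then there exists a legal sequence of firings (v_1, v_2, …, v_s) transforming x into y, and indices i_0 = 0 < i_1 < i_2 < … < i_t = s, such that for each j = 1, …, t no vertex appears twice in the subsequence v_{i_{j−1}+1}, …, v_{i_j}, and setting S_j = {v_{i_{j−1}+1}, …, v_{i_j}}, we have S_1 ⊆ S_2 ⊆ … ⊆ S_t ⊊ V. -/
namespace ChipFiring

variable {V : Type*}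

/-- Out-degree of a vertex: total multiplicity of edges leaving `v`. -/
def outdeg [Fintype V] (d : V → V → ℕ) (v : V) : ℕ := ∑ u, d v u

/-- In-degree of a vertex: total multiplicity of edges entering `v`. -/
def indeg [Fintype V] (d : V → V → ℕ) (v : V) : ℕ := ∑ u, d u v

/-- A digraph (multiplicity function) has no loops. -/
def Loopless (d : V → V → ℕ) : Prop := ∀ v, d v v = 0

/-- Weak connectivity: each pair of vertices is joined by an undirected walk. -/
def WeaklyConnected (d : V → V → ℕ) : Prop :=
  ∀ u v : V, Relation.ReflTransGen (fun a b => d a b ≠ 0 ∨ d b a ≠ 0) u v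

/-- Strong connectivity: each ordered pair of vertices is joined by a directed walk. -/
def StronglyConnected (d : V → V → ℕ) : Prop :=
  ∀ u v : V, Relation.ReflTransGen (fun a b => d a b ≠ 0) u v

/-- Eulerian: out-degree equals in-degree at each vertex. -/
def Eulerian [Fintype V] (d : V → V → ℕ) : Prop := ∀ v, outdeg d v = indeg d v

/-- The Laplacian matrix: `L(u,u) = -d⁺(u)`, and `L(u,v) = d(v,u)` for `u ≠ v`. -/
def laplacian [Fintype V] [DecidableEq V] (d : V → V → ℕ) : Matrix V V ℤ :=
  fun u v => if u = v then -(outdeg d v : ℤ) else (d v u : ℤ)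

/-- Firing vertex `v`: `v` sends one chip along each outgoing edge. -/
def fire [Fintype V] [DecidableEq V] (d : V → V → ℕ) (x : V → ℕ) (v : V) : V → ℕ :=
  fun u => if u = v then x v - outdeg d v else x u + d v u

/-- `LegalSeq d x α` : the sequence of firings `α` is legal from initial distribution `x`. -/
def LegalSeq [Fintype V] [DecidableEq V] (d : V → V → ℕ) : (V → ℕ) → List V → Prop
  | _, [] => True
  | x, v :: rest => outdeg d v ≤ x v ∧ LegalSeq d (fire d x v) rest

/-- The chip-distribution obtained from `x` after performing the firings `α`. -/
def runGame [Fintype V] [DecidableEq V] (d : V → V → ℕ) : (V → ℕ) → List V → (V → ℕ)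
  | x, [] => x
  | x, v :: rest => runGame d (fire d x v) rest

/-- The firing vector of a game: how many times each vertex is fired. -/
def firingVector [DecidableEq V] (α : List V) : V → ℕ := fun v => α.count v

/-- `x ⤳ y` : some legal game transforms `x` into `y`. -/
def Reaches [Fintype V] [DecidableEq V] (d : V → V → ℕ) (x y : V → ℕ) : Prop :=
  ∃ α : List V, LegalSeq d x α ∧ runGame d x α = y

/-- A period vector: a nonnegative integer vector in the kernel of the Laplacian. -/
def PeriodVector [Fintype V] [DecidableEq V] (d : V → V → ℕ) (p : V → ℕ) : Prop :=
  (laplacian d).mulVec (fun v => (p v : ℤ)) = 0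

/-- A vector `f ∈ ℕ^V` is reduced if `f ≥ p` fails for every nonzero period vector `p`. -/
def Reduced [Fintype V] [DecidableEq V] (d : V → V → ℕ) (f : V → ℕ) : Prop :=
  ∀ p : V → ℕ, PeriodVector d p → p ≠ 0 → ¬ (∀ v, p v ≤ f v)

/-- A distribution is recurrent if a nonempty legal game transforms it back to itself. -/
def Recurrent [Fintype V] [DecidableEq V] (d : V → V → ℕ) (x : V → ℕ) : Prop :=
  ∃ α : List V, α ≠ [] ∧ LegalSeq d x α ∧ runGame d x α = x

/-- Linear equivalence: `x = y + Lz` for some integer vector `z`. -/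
def LinEquiv [Fintype V] [DecidableEq V] (d : V → V → ℕ) (x y : V → ℕ) : Prop :=
  ∃ z : V → ℤ, ∀ v, (x v : ℤ) = (y v : ℤ) + (laplacian d).mulVec z v

/-- `x` is non-terminating: there is an infinite sequence of legal firings from `x`. -/
def NonTerminating [Fintype V] [DecidableEq V] (d : V → V → ℕ) (x : V → ℕ) : Prop :=
  ∃ s : ℕ → V, ∀ n : ℕ, LegalSeq d x (List.ofFn (fun i : Fin n => s i))

end ChipFiring

/-
Induct on the length of a legal game `α` from `x` to `y`, with support `S`. Deleting the first
firing of every vertex of `S` leaves a legal game, ending at `y - L·1_S`: on an Eulerian digraph,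
un-firing a set never lowers the chips on that set. From `y - L·1_S`, firing each vertex of `S`
once, in the order of its last firing in `α`, is legal and ends at `y`. So a block decomposition of
the shorter game followed by the block `α.dedup` works, and the supports can only grow along it.
If `S = V` this block is not allowed, but then `L·1_V = 0` because the digraph is Eulerian and
loopless, so the shorter game already ends at `y`.
-/

namespace ChipFiring

open Finset

section

variable {V : Type*} [DecidableEq V]

/-- Vertices of `s` count as already seen, so all their occurrences are kept. -/
def eraseFirstOccurrences (s : Finset V) : List V → List V
  | [] => []
  | a :: l =>
    if a ∈ s then a :: eraseFirstOccurrences s l else eraseFirstOccurrences (insert a s) l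

lemma eraseFirstOccurrences_sublist (s : Finset V) (l : List V) :
    (eraseFirstOccurrences s l).Sublist l := by
  induction l generalizing s with
  | nil => exact List.Sublist.slnil
  | cons a t ih =>
    unfold eraseFirstOccurrences
    split_ifs
    · exact (ih s).cons_cons a
    · exact (ih _).cons a

lemma length_eraseFirstOccurrences_empty_cons_lt {a : V} {l : List V} :
    (eraseFirstOccurrences ∅ (a :: l)).length < (a :: l).length := by
  simp only [eraseFirstOccurrences, notMem_empty, if_false, List.length_cons]
  exact Nat.lt_succ_of_le (eraseFirstOccurrences_sublist _ l).length_le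

lemma toFinset_eraseFirstOccurrences_subset (s : Finset V) (l : List V) :
    (eraseFirstOccurrences s l).toFinset ⊆ l.toFinset := fun _ hu =>
  List.mem_toFinset.2 <| (eraseFirstOccurrences_sublist s l).subset (List.mem_toFinset.1 hu)

variable [Fintype V] {d : V → V → ℕ}

lemma runGame_append (x : V → ℕ) (α β : List V) :
    runGame d x (α ++ β) = runGame d (runGame d x α) β := by
  induction α generalizing x with
  | nil => rfl
  | cons a t ih => exact ih _

lemma legalSeq_append {x : V → ℕ} {α β : List V} :
    LegalSeq d x (α ++ β) ↔ LegalSeq d x α ∧ LegalSeq d (runGame d x α) β := by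
  induction α generalizing x with
  | nil => simp [LegalSeq, runGame]
  | cons a t ih => simp only [List.cons_append, LegalSeq, runGame, ih, and_assoc]

lemma cast_fire {x : V → ℕ} {a : V} (h : outdeg d a ≤ x a) (v : V) :
    (fire d x a v : ℤ) = x v + laplacian d v a := by
  unfold fire laplacian
  split_ifs with hv
  · subst hv; push_cast [Nat.cast_sub h]; ring
  · push_cast; ring

lemma laplacian_apply_self (v : V) : laplacian d v v = -outdeg d v := if_pos rfl

lemma laplacian_apply_of_ne {u v : V} (h : u ≠ v) : laplacian d u v = d v u := if_neg h

lemma sum_laplacian_of_mem {s : Finset V} {v : V} (hv : v ∈ s) :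
    ∑ a ∈ s, laplacian d v a = ∑ a ∈ s.erase v, (d a v : ℤ) - outdeg d v := by
  rw [← add_sum_erase s _ hv, laplacian_apply_self,
    sum_congr rfl fun a ha => laplacian_apply_of_ne (ne_of_mem_erase ha).symm]
  ring

lemma sum_laplacian_nonpos_of_mem (heul : Eulerian d) {s : Finset V} {v : V} (hv : v ∈ s) :
    ∑ a ∈ s, laplacian d v a ≤ 0 := by
  have : ∑ a ∈ s.erase v, (d a v : ℤ) ≤ indeg d v := by
    rw [indeg, Nat.cast_sum]
    exact sum_le_sum_of_subset_of_nonneg (subset_univ _) fun _ _ _ => by positivity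
  rw [sum_laplacian_of_mem hv, heul v]
  linarith

lemma sum_laplacian_eq_zero (hloop : Loopless d) (heul : Eulerian d) (v : V) :
    ∑ a, laplacian d v a = 0 := by
  rw [sum_laplacian_of_mem (mem_univ v), sum_erase _ (by simp [hloop v]), heul v, indeg,
    Nat.cast_sum, sub_self]

lemma add_sum_le_runGame_of_notMem (w : V → ℕ) {v : V} {t : List V} (hv : v ∉ t) :
    w v + ∑ u ∈ t.toFinset, d u v ≤ runGame d w t v := by
  induction t generalizing w with
  | nil => simp [runGame]
  | cons b t ih =>
    have hbv : v ≠ b := fun h => hv (h ▸ List.mem_cons_self)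
    calc w v + ∑ u ∈ (b :: t).toFinset, d u v
        ≤ w v + d b v + ∑ u ∈ t.toFinset, d u v := by
          rw [List.toFinset_cons]
          by_cases hb : b ∈ t.toFinset
          · rw [insert_eq_of_mem hb]; omega
          · rw [sum_insert hb]; omega
      _ = fire d w b v + ∑ u ∈ t.toFinset, d u v := by simp [fire, hbv]
      _ ≤ runGame d w (b :: t) v := ih _ fun h => hv (List.mem_cons_of_mem b h)

lemma legalSeq_eraseFirstOccurrences (heul : Eulerian d) {s : Finset V} {α : List V}
    {z z' : V → ℕ} (hα : LegalSeq d z α)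
    (hz : ∀ v, (z' v : ℤ) = z v - ∑ a ∈ s, laplacian d v a) :
    LegalSeq d z' (eraseFirstOccurrences s α) ∧
      ∀ v, (runGame d z' (eraseFirstOccurrences s α) v : ℤ) =
        runGame d z α v - ∑ a ∈ s ∪ α.toFinset, laplacian d v a := by
  induction α generalizing s z z' with
  | nil => simpa [eraseFirstOccurrences, LegalSeq, runGame] using hz
  | cons a t ih =>
    obtain ⟨ha, ht⟩ := hα
    unfold eraseFirstOccurrences
    split_ifs with has
    · have ha' : outdeg d a ≤ z' a := by
        have := sum_laplacian_nonpos_of_mem heul (s := s) has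
        have := hz a
        omega
      obtain ⟨hleg, hrun⟩ := ih ht (z' := fire d z' a) fun v => by
        rw [cast_fire ha, cast_fire ha', hz]; ring
      refine ⟨⟨ha', hleg⟩, fun v => ?_⟩
      rw [runGame, runGame, hrun, List.toFinset_cons, union_insert, insert_eq_of_mem]
      exact mem_union_left _ has
    · obtain ⟨hleg, hrun⟩ := ih ht (s := insert a s) (z' := z') fun v => by
        rw [cast_fire ha, hz, sum_insert has]; ring
      refine ⟨hleg, fun v => ?_⟩
      rw [hrun, runGame, List.toFinset_cons, union_insert, insert_union]

lemma legalSeq_eraseFirstOccurrences_empty (heul : Eulerian d) {α : List V} {x : V → ℕ}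
    (hα : LegalSeq d x α) :
    LegalSeq d x (eraseFirstOccurrences ∅ α) ∧
      ∀ v, (runGame d x (eraseFirstOccurrences ∅ α) v : ℤ) =
        runGame d x α v - ∑ a ∈ α.toFinset, laplacian d v a := by
  simpa using legalSeq_eraseFirstOccurrences heul (s := ∅) hα (by simp)

lemma runGame_eraseFirstOccurrences_empty_of_toFinset_eq_univ (hloop : Loopless d)
    (heul : Eulerian d) {α : List V} {x : V → ℕ} (hα : LegalSeq d x α)
    (hS : α.toFinset = univ) :
    runGame d x (eraseFirstOccurrences ∅ α) = runGame d x α := by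
  ext v
  have := (legalSeq_eraseFirstOccurrences_empty heul hα).2 v
  rw [hS, sum_laplacian_eq_zero hloop heul, sub_zero] at this
  exact_mod_cast this

/-- `α.dedup` fires each vertex at the position of its last firing in `α`. After the last firing of
`a`, each vertex `u` fired later in `α` sends `d u a` chips to `a`, which pays for firing `a`
early. -/
lemma legalSeq_dedup {α : List V} {z z' : V → ℕ} (hα : LegalSeq d z α)
    (hz : ∀ v, (z' v : ℤ) = runGame d z α v - ∑ a ∈ α.toFinset, laplacian d v a) :
    LegalSeq d z' α.dedup ∧ runGame d z' α.dedup = runGame d z α := by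
  induction α generalizing z z' with
  | nil =>
    refine ⟨trivial, funext fun v => ?_⟩
    simpa [runGame] using hz v
  | cons a t ih =>
    obtain ⟨ha, ht⟩ := hα
    by_cases hat : a ∈ t
    · rw [List.dedup_cons_of_mem hat]
      refine ih ht fun v => ?_
      rw [hz, List.toFinset_cons, insert_eq_of_mem (List.mem_toFinset.2 hat)]
      rfl
    · have haT : a ∉ t.toFinset := mt List.mem_toFinset.1 hat
      rw [List.dedup_cons_of_notMem hat]
      have ha' : outdeg d a ≤ z' a := by
        have hgain : (fire d z a a : ℤ) + ∑ u ∈ t.toFinset, (d u a : ℤ) ≤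
            runGame d (fire d z a) t a :=
          mod_cast add_sum_le_runGame_of_notMem (fire d z a) hat
        have hza : (z' a : ℤ) =
            runGame d (fire d z a) t a - (∑ u ∈ t.toFinset, (d u a : ℤ) - outdeg d a) := by
          rw [hz, List.toFinset_cons, sum_laplacian_of_mem (mem_insert_self _ _), erase_insert haT]
          rfl
        omega
      obtain ⟨hleg, hrun⟩ := ih ht (z' := fire d z' a) fun v => by
        rw [cast_fire ha', hz, List.toFinset_cons, sum_insert haT, runGame]; ring
      exact ⟨⟨ha', hleg⟩, hrun⟩

theorem exists_ascending_blocks (hloop : Loopless d) (heul : Eulerian d) (x : V → ℕ) :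
    ∀ α : List V, LegalSeq d x α → ∃ Bs : List (List V),
      LegalSeq d x Bs.flatten ∧ runGame d x Bs.flatten = runGame d x α ∧
      (∀ B ∈ Bs, B ≠ [] ∧ B.Nodup ∧ B.toFinset ⊂ univ ∧ B.toFinset ⊆ α.toFinset) ∧
      Bs.IsChain (fun A B => A.toFinset ⊆ B.toFinset)
  | [], _ => ⟨[], trivial, rfl, by simp, .nil⟩
  | a :: t, hα => by
    obtain ⟨hleg, hrun⟩ := legalSeq_eraseFirstOccurrences_empty heul hα
    obtain ⟨Bs, hBleg, hBrun, hBs, hchain⟩ :=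
      exists_ascending_blocks hloop heul x (eraseFirstOccurrences ∅ (a :: t)) hleg
    have hsupp : ∀ B ∈ Bs, B.toFinset ⊆ (a :: t).toFinset := fun B hB =>
      (hBs B hB).2.2.2.trans (toFinset_eraseFirstOccurrences_subset _ _)
    by_cases hS : (a :: t).toFinset = univ
    · refine ⟨Bs, hBleg, hBrun.trans ?_, fun B hB => ?_, hchain⟩
      · exact runGame_eraseFirstOccurrences_empty_of_toFinset_eq_univ hloop heul hα hS
      · obtain ⟨hne, hnd, hproper, -⟩ := hBs B hB
        exact ⟨hne, hnd, hproper, hsupp B hB⟩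
    · obtain ⟨hD, hDrun⟩ := legalSeq_dedup hα hrun
      have hdedup : (a :: t).dedup.toFinset = (a :: t).toFinset :=
        List.toFinset.ext fun _ => List.mem_dedup
      refine ⟨Bs ++ [(a :: t).dedup], ?_, ?_, fun B hB => ?_, ?_⟩
      · simpa [legalSeq_append, hBrun] using ⟨hBleg, hD⟩
      · simpa [runGame_append, hBrun] using hDrun
      · rcases List.mem_append.1 hB with hB | hB
        · obtain ⟨hne, hnd, hproper, -⟩ := hBs B hB
          exact ⟨hne, hnd, hproper, hsupp B hB⟩
        · rw [List.mem_singleton.1 hB, hdedup]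
          exact ⟨by simp, List.nodup_dedup _, ssubset_univ_iff.2 hS, subset_rfl⟩
      · refine hchain.append (.singleton _) fun A hA B hB => ?_
        obtain rfl : (a :: t).dedup = B := Option.mem_some_iff.1 hB
        exact hdedup ▸ hsupp A (List.mem_of_getLast? hA)
termination_by α => α.length
decreasing_by exact length_eraseFirstOccurrences_empty_cons_lt

end

theorem reaches_by_ascending_chain_general {V : Type*} [Fintype V] [DecidableEq V]
    (d : V → V → ℕ) (hloop : Loopless d) (heul : Eulerian d)
    (x y : V → ℕ) (h : Reaches d x y) :
    ∃ Bs : List (List V),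
      LegalSeq d x Bs.flatten ∧ runGame d x Bs.flatten = y ∧
      (∀ B ∈ Bs, B ≠ [] ∧ B.Nodup ∧ B.toFinset ⊂ Finset.univ) ∧
      Bs.Chain' (fun A B => A.toFinset ⊆ B.toFinset) := by
  obtain ⟨α, hα, rfl⟩ := h
  obtain ⟨Bs, hleg, hrun, hBs, hchain⟩ := exists_ascending_blocks hloop heul x α hα
  refine ⟨Bs, hleg, hrun, fun B hB => ?_, hchain⟩
  obtain ⟨hne, hnd, hproper, -⟩ := hBs B hB
  exact ⟨hne, hnd, hproper⟩

/-- On a connected Eulerian digraph, if `x ⤳ y`, then `y` can be reached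
from `x` by a legal game that is a concatenation of consecutive blocks `B_1, …, B_t`, where
no vertex appears twice in a block and the vertex sets of the blocks form an ascending
chain `S_1 ⊆ S_2 ⊆ … ⊆ S_t ⊊ V`. -/
theorem reaches_by_ascending_chain {V : Type*} [Fintype V] [DecidableEq V]
    (d : V → V → ℕ) (hloop : Loopless d) (hconn : WeaklyConnected d) (heul : Eulerian d)
    (x y : V → ℕ) (h : Reaches d x y) :
    ∃ Bs : List (List V),
      LegalSeq d x Bs.flatten ∧ runGame d x Bs.flatten = y ∧
      (∀ B ∈ Bs, B ≠ [] ∧ B.Nodup ∧ B.toFinset ⊂ Finset.univ) ∧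
      Bs.Chain' (fun A B => A.toFinset ⊆ B.toFinset) :=
  reaches_by_ascending_chain_general d hloop heul x y h

end ChipFiring
end

section
/- Let G be a strongly connected digraph and x, y chip-distributions with x ~ y. Then there exists a nonnegative integer vector f ∈ ℕ^V such that x = y + Lf. -/
namespace ChipFiring

/-!
Firing conserves chips, so the columns of the Laplacian `L` sum to zero and `L` has a nonzero
integer kernel vector `r`. The triangle inequality gives `L|r| ≥ 0` componentwise, and
conservation forces `L|r| = 0`. The kernel equation `d⁺(u) s(u) = ∑ᵥ d(v,u) s(v)` propagates
positivity of `s = |r|` along edges, so by strong connectivity `|r|` is a strictly positive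
period vector `p`. If `x = y + Lz`, then `f = z + kp` works for every large enough `k`.
-/

open Matrix

section Laplacian

variable [Fintype V] [DecidableEq V] {d : V → V → ℕ}

theorem laplacian_apply_of_loopless (hloop : Loopless d) (u v : V) :
    laplacian d u v = d v u - if u = v then (outdeg d u : ℤ) else 0 := by
  unfold laplacian
  split_ifs with h
  · subst h
    simp [hloop u]
  · simp

theorem laplacian_mulVec_apply (hloop : Loopless d) (s : V → ℤ) (u : V) :
    (laplacian d *ᵥ s) u = ∑ v, (d v u : ℤ) * s v - outdeg d u * s u := by
  simp only [mulVec, dotProduct, laplacian_apply_of_loopless hloop, sub_mul, ite_mul, zero_mul,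
    Finset.sum_sub_distrib, Finset.sum_ite_eq, Finset.mem_univ, if_true]

theorem one_vecMul_laplacian (hloop : Loopless d) : (fun _ => 1 : V → ℤ) ᵥ* laplacian d = 0 := by
  funext v
  simp only [vecMul, dotProduct, one_mul, laplacian_apply_of_loopless hloop,
    Finset.sum_sub_distrib, Finset.sum_ite_eq', Finset.mem_univ, if_true, Pi.zero_apply]
  simp [outdeg]

theorem sum_laplacian_mulVec (hloop : Loopless d) (s : V → ℤ) :
    ∑ u, (laplacian d *ᵥ s) u = 0 :=
  calc ∑ u, (laplacian d *ᵥ s) u = (fun _ => 1) ⬝ᵥ (laplacian d *ᵥ s) := by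
        simp only [dotProduct, one_mul]
    _ = ((fun _ => 1) ᵥ* laplacian d) ⬝ᵥ s := dotProduct_mulVec _ _ _
    _ = 0 := by rw [one_vecMul_laplacian hloop, zero_dotProduct]

theorem det_laplacian_eq_zero [Nonempty V] (hloop : Loopless d) : (laplacian d).det = 0 :=
  exists_vecMul_eq_zero_iff.mp
    ⟨_, fun h => one_ne_zero (congrFun h (Classical.arbitrary V)), one_vecMul_laplacian hloop⟩

theorem laplacian_mulVec_abs_eq_zero (hloop : Loopless d) {s : V → ℤ}
    (hs : laplacian d *ᵥ s = 0) : laplacian d *ᵥ |s| = 0 := by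
  have hnonneg : ∀ u, 0 ≤ (laplacian d *ᵥ |s|) u := fun u => by
    have hu := congrFun hs u
    rw [laplacian_mulVec_apply hloop, Pi.zero_apply, sub_eq_zero] at hu
    rw [laplacian_mulVec_apply hloop, sub_nonneg]
    calc (outdeg d u : ℤ) * |s| u = |∑ v, (d v u : ℤ) * s v| := by
          rw [hu, abs_mul, Nat.abs_cast, Pi.abs_apply]
      _ ≤ ∑ v, |(d v u : ℤ) * s v| := Finset.abs_sum_le_sum_abs _ _
      _ = ∑ v, (d v u : ℤ) * |s| v := by simp only [abs_mul, Nat.abs_cast, Pi.abs_apply]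
  funext u
  exact (Finset.sum_eq_zero_iff_of_nonneg fun u _ => hnonneg u).mp
    (sum_laplacian_mulVec hloop |s|) u (Finset.mem_univ u)

theorem pos_of_laplacian_mulVec_eq_zero (hloop : Loopless d) (hstrong : StronglyConnected d)
    {s : V → ℤ} (hs_nonneg : 0 ≤ s) (hs : laplacian d *ᵥ s = 0) {a : V} (ha : 0 < s a) (b : V) :
    0 < s b := by
  induction hstrong a b with
  | refl => exact ha
  | @tail b c _ hbc ih =>
    have hc := congrFun hs c
    rw [laplacian_mulVec_apply hloop, Pi.zero_apply, sub_eq_zero] at hc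
    have hflow : 0 < ∑ v, (d v c : ℤ) * s v :=
      lt_of_lt_of_le (mul_pos (by exact_mod_cast Nat.pos_of_ne_zero hbc) ih)
        (Finset.single_le_sum (fun v _ => mul_nonneg (Nat.cast_nonneg _) (hs_nonneg v))
          (Finset.mem_univ b))
    exact pos_of_mul_pos_right (hc ▸ hflow) (Nat.cast_nonneg _)

theorem exists_pos_periodVector (hloop : Loopless d) (hstrong : StronglyConnected d) :
    ∃ p : V → ℕ, (∀ v, 0 < p v) ∧ PeriodVector d p := by
  rcases isEmpty_or_nonempty V with _ | _
  · exact ⟨fun _ => 1, isEmptyElim, Subsingleton.elim _ _⟩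
  obtain ⟨r, hr_ne, hr⟩ := exists_mulVec_eq_zero_iff.mpr (det_laplacian_eq_zero hloop)
  obtain ⟨a, ha⟩ := Function.ne_iff.mp hr_ne
  have hkernel := laplacian_mulVec_abs_eq_zero hloop hr
  have hpos := pos_of_laplacian_mulVec_eq_zero hloop hstrong (abs_nonneg r) hkernel
    (abs_pos.mpr ha)
  refine ⟨fun v => (|r| v).toNat, fun v => by simpa using hpos v, ?_⟩
  have hcast : (fun v => ((|r| v).toNat : ℤ)) = |r| :=
    funext fun v => Int.toNat_of_nonneg (hpos v).le
  rwa [PeriodVector, hcast]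

end Laplacian

theorem exists_nonneg_add_mul_of_pos {ι : Type*} [Fintype ι] (z : ι → ℤ) {p : ι → ℤ}
    (hp : ∀ i, 0 < p i) : ∃ k : ℤ, ∀ i, 0 ≤ z i + k * p i := by
  refine ⟨∑ i, |z i|, fun i => ?_⟩
  have hzi : |z i| ≤ ∑ j, |z j| :=
    Finset.single_le_sum (fun j _ => abs_nonneg (z j)) (Finset.mem_univ i)
  have hk : ∑ j, |z j| ≤ (∑ j, |z j|) * p i := le_mul_of_one_le_right (by positivity) (hp i)
  linarith [neg_abs_le (z i)]

/-- On a strongly connected digraph, if `x ~ y` then `x = y + Lf` for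
some nonnegative integer vector `f`. -/
theorem exists_nonneg_of_linEquiv {V : Type*} [Fintype V] [DecidableEq V]
    (d : V → V → ℕ) (hloop : Loopless d) (hstrong : StronglyConnected d)
    (x y : V → ℕ) (hequiv : LinEquiv d x y) :
    ∃ f : V → ℕ, ∀ v, (x v : ℤ) = (y v : ℤ) +
      (laplacian d).mulVec (fun u => (f u : ℤ)) v := by
  obtain ⟨z, hz⟩ := hequiv
  obtain ⟨p, hp_pos, hp⟩ := exists_pos_periodVector hloop hstrong
  obtain ⟨k, hk⟩ := exists_nonneg_add_mul_of_pos z (p := fun v => (p v : ℤ))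
    (fun v => by exact_mod_cast hp_pos v)
  refine ⟨fun v => (z v + k * p v).toNat, fun v => ?_⟩
  have hf : (fun u => ((z u + k * p u).toNat : ℤ)) = z + k • fun u => (p u : ℤ) :=
    funext fun u => by simpa using Int.toNat_of_nonneg (hk u)
  rw [hf, mulVec_add, mulVec_smul, hp, smul_zero, add_zero]
  exact hz v

end ChipFiring
end
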